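/- arXiv:math/0302202 — 5 statements merged into one kernel-verified Lean document; each statement's English description precedes it below -/
import Mathlib

section
/- Let (γ_{i,j}) (i≥1, 1≤j≤i) be a Seidel triangle of real numbers satisfying the boundary conditions γ_{2,2}=1, γ_{2k,2k}=0 for all k≥2, and γ_{2k+1,1}+γ_{2k+1,2k+1}=0 for all k≥0. Then for all i≥1 and 1≤j≤i, γ_{i,j} = (∂^{i−j}/∂x^{i−j})(∂^{j−1}/∂y^{j−1}) G(x,y) evaluated at (0,0), where G(x,y)=2(x+y)e^y/(e^{x+y}+1); i.e., the exponential generating function Σ_{i≥1}Σ_{j=1}^i γ_{i,j} x^{i−j}y^{j−1}/((i−j)!(j−1)!) of the triangle equals G. -/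
open Finset
noncomputable def sF : ℝ → ℝ := fun t => 2 * t / (Real.exp t + 1)

lemma sF_smooth : ContDiff ℝ (⊤ : ℕ∞) sF := by
  apply ContDiff.div
  · fun_prop
  · fun_prop
  · intro t; positivity

noncomputable def Gk (n : ℕ) : ℝ := iteratedDeriv n sF 0

lemma itD_add {f g : ℝ → ℝ} (hf : ContDiff ℝ (⊤ : ℕ∞) f) (hg : ContDiff ℝ (⊤ : ℕ∞) g) (n : ℕ) (x : ℝ) :
    iteratedDeriv n (fun t => f t + g t) x = iteratedDeriv n f x + iteratedDeriv n g x := by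
  simp_rw [← iteratedDerivWithin_univ]
  exact iteratedDerivWithin_add (Set.mem_univ x) uniqueDiffOn_univ
    (hf.contDiffWithinAt.of_le (by exact_mod_cast (le_top : (n : ℕ∞) ≤ ⊤))) (hg.contDiffWithinAt.of_le (by exact_mod_cast (le_top : (n : ℕ∞) ≤ ⊤)))

lemma itD_cmul {f : ℝ → ℝ} (hf : ContDiff ℝ (⊤ : ℕ∞) f) (c : ℝ) (n : ℕ) (x : ℝ) :
    iteratedDeriv n (fun t => c * f t) x = c * iteratedDeriv n f x := by
  simp_rw [← iteratedDerivWithin_univ]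
  exact iteratedDerivWithin_const_mul (Set.mem_univ x) uniqueDiffOn_univ c
    (hf.contDiffWithinAt.of_le (by exact_mod_cast (le_top : (n : ℕ∞) ≤ ⊤)))

lemma itD_smooth {f : ℝ → ℝ} (hf : ContDiff ℝ (⊤ : ℕ∞) f) (n : ℕ) :
    ContDiff ℝ (⊤ : ℕ∞) (iteratedDeriv n f) := by
  rw [iteratedDeriv_eq_iterate]; exact hf.iterate_deriv n

lemma itD_itD {f : ℝ → ℝ} (a m : ℕ) :
    iteratedDeriv a (iteratedDeriv m f) = iteratedDeriv (a + m) f := by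
  induction a with
  | zero => simp
  | succ a ih => rw [iteratedDeriv_succ, ih, ← iteratedDeriv_succ]; rw [Nat.add_right_comm]

lemma pascal_sum (K : ℕ → ℝ) (b : ℕ) :
    ∑ m ∈ range (b + 2), ((b + 1).choose m : ℝ) * K m
      = ∑ m ∈ range (b + 1), (b.choose m : ℝ) * K m
        + ∑ m ∈ range (b + 1), (b.choose m : ℝ) * K (m + 1) := by
  rw [Finset.sum_range_succ' (fun m => ((b + 1).choose m : ℝ) * K m)]
  have h1 : ∀ m ∈ range (b + 1), ((b + 1).choose (m + 1) : ℝ) * K (m + 1)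
      = (b.choose m : ℝ) * K (m + 1) + (b.choose (m + 1) : ℝ) * K (m + 1) := by
    intro m _
    rw [Nat.choose_succ_succ]
    push_cast
    ring
  rw [Finset.sum_congr rfl h1, Finset.sum_add_distrib]
  have h2 : ∑ m ∈ range (b + 1), (b.choose (m + 1) : ℝ) * K (m + 1) + ((b + 1).choose 0 : ℝ) * K 0
      = ∑ m ∈ range (b + 1), (b.choose m : ℝ) * K m := by
    rw [Finset.sum_range_succ' (fun m => (b.choose m : ℝ) * K m),
      Finset.sum_range_succ (fun m => (b.choose (m + 1) : ℝ) * K (m + 1))]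
    simp [Nat.choose_succ_self]
  linarith [h2]

lemma leib {f : ℝ → ℝ} (hf : ContDiff ℝ (⊤ : ℕ∞) f) (b : ℕ) :
    iteratedDeriv b (fun y => Real.exp y * f y)
      = fun y => ∑ m ∈ range (b + 1),
          (b.choose m : ℝ) * (Real.exp y * iteratedDeriv m f y) := by
  have hsm : ∀ m : ℕ, ContDiff ℝ (⊤ : ℕ∞) (iteratedDeriv m f) := by
    intro m; rw [iteratedDeriv_eq_iterate]; exact hf.iterate_deriv m
  have dm : ∀ m : ℕ, Differentiable ℝ (iteratedDeriv m f) := by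
    intro m
    exact (hsm m).differentiable (by simp)
  induction b with
  | zero => simp [iteratedDeriv_zero]
  | succ b ih =>
    funext y
    rw [iteratedDeriv_succ, ih]
    have hdiff : ∀ m ∈ range (b + 1), DifferentiableAt ℝ
        (fun y => (b.choose m : ℝ) * (Real.exp y * iteratedDeriv m f y)) y := by
      intro m _
      exact (((Real.differentiable_exp).mul (dm m)).const_mul _).differentiableAt
    rw [deriv_fun_sum hdiff]
    have hterm : ∀ m ∈ range (b + 1),
        deriv (fun y => (b.choose m : ℝ) * (Real.exp y * iteratedDeriv m f y)) y
          = (b.choose m : ℝ) * (Real.exp y * iteratedDeriv m f y)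
            + (b.choose m : ℝ) * (Real.exp y * iteratedDeriv (m + 1) f y) := by
      intro m _
      rw [deriv_const_mul _ (show DifferentiableAt ℝ (fun y => Real.exp y * iteratedDeriv m f y) y from
          (Real.differentiable_exp.mul (dm m)).differentiableAt),
        deriv_fun_mul (Real.differentiable_exp.differentiableAt) ((dm m).differentiableAt),
        Real.deriv_exp, iteratedDeriv_succ]
      ring
    rw [Finset.sum_congr rfl hterm, Finset.sum_add_distrib]
    rw [pascal_sum (fun m => Real.exp y * iteratedDeriv m f y) b]

lemma itD_zero_fun (n : ℕ) : iteratedDeriv n (fun _ : ℝ => (0 : ℝ)) = fun _ => 0 := by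
  induction n with
  | zero => simp [iteratedDeriv_zero]
  | succ n ih =>
    rw [iteratedDeriv_succ', show deriv (fun _ : ℝ => (0 : ℝ)) = fun _ => (0 : ℝ) from
      funext fun t => deriv_const t 0, ih]

lemma lin_eval (n : ℕ) : iteratedDeriv n (fun t : ℝ => 2 * t) 0 = if n = 1 then 2 else 0 := by
  have hd : deriv (fun t : ℝ => 2 * t) = fun _ => (2 : ℝ) := by
    funext t
    rw [deriv_const_mul_field]
    simp
  match n with
  | 0 => simp [iteratedDeriv_zero]
  | 1 => simp [iteratedDeriv_one, hd]
  | n + 2 =>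
    rw [iteratedDeriv_succ', hd, iteratedDeriv_succ',
      show deriv (fun _ : ℝ => (2 : ℝ)) = fun _ => (0 : ℝ) from funext fun t => deriv_const t 2,
      itD_zero_fun]
    simp

lemma sF_neg (t : ℝ) : sF (-t) = sF t - 2 * t := by
  unfold sF
  rw [Real.exp_neg]
  have h1 : Real.exp t ≠ 0 := (Real.exp_pos t).ne'
  have h2 : Real.exp t + 1 ≠ 0 := by positivity
  have h3 : (Real.exp t)⁻¹ + 1 ≠ 0 := by positivity
  field_simp
  ring

lemma Gk_parity (n : ℕ) :
    Gk n - (if n = 1 then 2 else 0) = (-1 : ℝ) ^ n * Gk n := by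
  have h := iteratedDeriv_comp_neg n sF 0
  rw [neg_zero] at h
  have heq : (fun t : ℝ => sF (-t)) = fun t => sF t + (-1) * (2 * t) := by
    funext t; rw [sF_neg]; ring
  rw [heq, itD_add sF_smooth (by fun_prop) n 0, itD_cmul (by fun_prop) (-1) n 0,
    lin_eval, smul_eq_mul] at h
  unfold Gk
  linarith [h]

lemma Gk_zero : Gk 0 = 0 := by simp [Gk, iteratedDeriv_zero, sF]

lemma Gk_one : Gk 1 = 1 := by
  have h := Gk_parity 1
  simp at h
  linarith

lemma Gk_odd (n : ℕ) (hn : n % 2 = 1) (h1 : n ≠ 1) : Gk n = 0 := by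
  have h := Gk_parity n
  rw [if_neg h1, Odd.neg_one_pow ⟨n / 2, by omega⟩] at h
  linarith

lemma Gk_sum (n : ℕ) :
    ∑ m ∈ range (n + 1), (n.choose m : ℝ) * Gk m = (if n = 1 then 2 else 0) - Gk n := by
  have heq : (fun t : ℝ => Real.exp t * sF t) = fun t => 2 * t + (-1) * sF t := by
    funext t
    unfold sF
    have h2 : Real.exp t + 1 ≠ 0 := by positivity
    field_simp
    ring
  have h := congrFun (leib sF_smooth n) 0
  rw [heq, itD_add (by fun_prop) (contDiff_const.mul sF_smooth) n 0, lin_eval,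
    itD_cmul sF_smooth (-1) n 0] at h
  simp only [Real.exp_zero, one_mul] at h
  unfold Gk
  rw [← h]
  ring

noncomputable def gT (a b : ℕ) : ℝ := ∑ m ∈ range (b + 1), (b.choose m : ℝ) * Gk (a + m)

lemma gT_rec (a b : ℕ) : gT a (b + 1) = gT a b + gT (a + 1) b := by
  unfold gT
  rw [show b + 1 + 1 = b + 2 from rfl, pascal_sum (fun m => Gk (a + m)) b]
  congr 1
  refine Finset.sum_congr rfl fun m _ => ?_
  rw [show a + (m + 1) = a + 1 + m by omega]

lemma gT_left (b : ℕ) : gT 0 b = (if b = 1 then 2 else 0) - Gk b := by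
  unfold gT
  simp only [zero_add]
  exact Gk_sum b

lemma gT_right (a : ℕ) : gT a 0 = Gk a := by simp [gT]

lemma itD_finsum {s : Finset ℕ} {F : ℕ → ℝ → ℝ} (hF : ∀ m ∈ s, ContDiff ℝ (⊤ : ℕ∞) (F m))
    (n : ℕ) (x : ℝ) :
    iteratedDeriv n (fun t => ∑ m ∈ s, F m t) x = ∑ m ∈ s, iteratedDeriv n (F m) x := by
  classical
  induction s using Finset.induction with
  | empty => simp [itD_zero_fun n]
  | insert c s' hm ih =>
    have hc : ContDiff ℝ (⊤ : ℕ∞) (F c) := hF c (Finset.mem_insert_self c s')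
    have hs : ∀ m ∈ s', ContDiff ℝ (⊤ : ℕ∞) (F m) := fun m hm' =>
      hF m (Finset.mem_insert_of_mem hm')
    have hsum : ContDiff ℝ (⊤ : ℕ∞) (fun t => ∑ m ∈ s', F m t) := ContDiff.sum hs
    simp_rw [Finset.sum_insert hm]
    rw [← ih hs]
    exact itD_add hc hsum n x

lemma seidel_key (γ : ℕ → ℕ → ℝ)
    (hrec : ∀ i j : ℕ, 2 ≤ j → j ≤ i → γ i j = γ i (j - 1) + γ (i - 1) (j - 1))
    (h22 : γ 2 2 = 1)
    (heven : ∀ k : ℕ, 2 ≤ k → γ (2 * k) (2 * k) = 0)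
    (hodd : ∀ k : ℕ, γ (2 * k + 1) 1 + γ (2 * k + 1) (2 * k + 1) = 0) :
    ∀ n a b : ℕ, a + b = n → γ (n + 1) (b + 1) = gT a b := by
  intro n
  induction n using Nat.strong_induction_on with
  | _ n IH =>
    have hδ : ∀ b, b ≤ n → γ (n + 1) (b + 1) - gT (n - b) b = γ (n + 1) 1 - gT n 0 := by
      intro b hb
      induction b with
      | zero => simp
      | succ b ihb =>
        have hb' : b ≤ n := by omega
        have h1 : γ (n + 1) (b + 2) = γ (n + 1) (b + 1) + γ n (b + 1) := by
          have h := hrec (n + 1) (b + 2) (by omega) (by omega)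
          simpa using h
        have h2 : γ n (b + 1) = gT (n - (b + 1)) b := by
          have h := IH (n - 1) (by omega) (n - 1 - b) b (by omega)
          rw [show n - 1 + 1 = n by omega] at h
          rw [show n - (b + 1) = n - 1 - b by omega]
          exact h
        have h3 : gT (n - (b + 1)) (b + 1) = gT (n - (b + 1)) b + gT (n - b) b := by
          have h := gT_rec (n - (b + 1)) b
          rw [show n - (b + 1) + 1 = n - b by omega] at h
          exact h
        have h4 := ihb hb'
        rw [show b + 1 + 1 = b + 2 from rfl, h1, h3, h2]
        linarith
    intro a b hab
    have hb : b ≤ n := by omega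
    have ha : a = n - b := by omega
    suffices hδ0 : γ (n + 1) 1 - gT n 0 = 0 by
      have h := hδ b hb
      rw [hδ0] at h
      rw [ha]
      linarith
    have hδn := hδ n le_rfl
    rw [Nat.sub_self] at hδn
    rcases Nat.even_or_odd n with ⟨k, hk⟩ | ⟨k, hk⟩
    · -- n even: n + 1 = 2k + 1, use hodd
      have ho := hodd k
      rw [show 2 * k + 1 = n + 1 by omega] at ho
      have hg : gT n 0 + gT 0 n = 0 := by
        rw [gT_right, gT_left, if_neg (by omega)]
        ring
      linarith
    · -- n odd
      have hδn0 : γ (n + 1) (n + 1) - gT 0 n = 0 := by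
        rcases eq_or_ne n 1 with rfl | hne
        · rw [show (1 : ℕ) + 1 = 2 from rfl, h22, gT_left]
          norm_num [Gk_one]
        · have hk2 : 2 ≤ k + 1 := by omega
          have he := heven (k + 1) hk2
          rw [show 2 * (k + 1) = n + 1 by omega] at he
          rw [he, gT_left, if_neg hne, Gk_odd n (by omega) hne]
          ring
      linarith


/-- The Seidel triangle for signed Genocchi numbers: a family `γ_{i,j}` (`i ≥ 1`,
`1 ≤ j ≤ i`) satisfying the Seidel recurrence `γ_{i,j} = γ_{i,j-1} + γ_{i-1,j-1}` and the
periodic boundary conditions `γ_{2,2}=1`, `γ_{2k,2k}=0` (`k ≥ 2`),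
`γ_{2k+1,1}+γ_{2k+1,2k+1}=0` (`k ≥ 0`) has exponential generating function
`G(x,y) = 2(x+y)e^y/(e^{x+y}+1)`; i.e. each entry is the corresponding mixed partial
derivative of `G` at the origin. -/
theorem genocchi_seidel_egf (γ : ℕ → ℕ → ℝ)
    (hrec : ∀ i j : ℕ, 2 ≤ j → j ≤ i → γ i j = γ i (j - 1) + γ (i - 1) (j - 1))
    (h22 : γ 2 2 = 1)
    (heven : ∀ k : ℕ, 2 ≤ k → γ (2 * k) (2 * k) = 0)
    (hodd : ∀ k : ℕ, γ (2 * k + 1) 1 + γ (2 * k + 1) (2 * k + 1) = 0) :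
    ∀ i j : ℕ, 1 ≤ i → 1 ≤ j → j ≤ i →
      γ i j =
        iteratedDeriv (i - j)
          (fun x =>
            iteratedDeriv (j - 1)
              (fun y => 2 * (x + y) * Real.exp y / (Real.exp (x + y) + 1)) 0) 0 := by
  intro i j hi hj hij
  have key := seidel_key γ hrec h22 heven hodd (i - 1) (i - j) (j - 1) (by omega)
  rw [show i - 1 + 1 = i by omega, show j - 1 + 1 = j by omega] at key
  rw [key]
  have hinner : (fun x : ℝ => iteratedDeriv (j - 1)
        (fun y => 2 * (x + y) * Real.exp y / (Real.exp (x + y) + 1)) 0)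
      = fun x => ∑ m ∈ range (j - 1 + 1), ((j - 1).choose m : ℝ) * iteratedDeriv m sF x := by
    funext x
    have hfx : ContDiff ℝ (⊤ : ℕ∞) (fun y : ℝ => sF (x + y)) := sF_smooth.comp (by fun_prop)
    have heq : (fun y : ℝ => 2 * (x + y) * Real.exp y / (Real.exp (x + y) + 1))
        = fun y => Real.exp y * (fun y : ℝ => sF (x + y)) y := by
      funext y
      simp only [sF]
      ring
    rw [heq, congrFun (leib hfx (j - 1)) 0]
    refine Finset.sum_congr rfl fun m _ => ?_
    rw [iteratedDeriv_comp_const_add m sF x]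
    simp
  rw [hinner,
    itD_finsum (fun m _ => (contDiff_const.mul (itD_smooth sF_smooth m))) (i - j) 0]
  unfold gT
  refine Finset.sum_congr rfl fun m _ => ?_
  rw [itD_cmul (itD_smooth sF_smooth m) _ (i - j) 0, itD_itD (i - j) m]
  rfl
end

section
/- Let (β^L_{i,j}) and (β^R_{i,j}) (i≥1, 1≤j≤i) be families of real numbers such that both signed families ((−1)^{(i−1)(i−2)/2}β^L_{i,j}) and ((−1)^{(i−1)(i−2)/2}β^R_{i,j}) are Seidel triangles, and such that β^L_{1,1}=1, β^L_{2k+1,1}=0 for all k≥1, β^L_{k,k}=β^R_{k,1} for all k≥1, and β^R_{2k,2k}=0 for all k≥1. Then for all i≥1, 1≤j≤i: (−1)^{(i−1)(i−2)/2}β^L_{i,j} equals the mixed partial derivative (∂_x^{i−j}∂_y^{j−1}G_L)(0,0) with G_L(x,y)=e^{−2x−y}/cosh(2(x+y)), and (−1)^{(i−1)(i−2)/2}β^R_{i,j} = (∂_x^{i−j}∂_y^{j−1}G_R)(0,0) with G_R(x,y)=e^{−x}/cosh(2(x+y)). -/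
open Real
open scoped ContDiff

/-- `φ_L(u) = e^{-u}/cosh(2u)`. -/
noncomputable def phiAL : ℝ → ℝ := fun u => Real.exp (-u) / Real.cosh (2 * u)

/-- `φ_R(u) = 1/cosh(2u)`. -/
noncomputable def phiAR : ℝ → ℝ := fun u => 1 / Real.cosh (2 * u)

lemma cd_nat {f : ℝ → ℝ} (h : ContDiff ℝ ∞ f) (n : ℕ) : ContDiff ℝ n f :=
  h.of_le (by exact_mod_cast le_top)

lemma contDiff_phiAL : ContDiff ℝ ∞ phiAL := by
  apply ContDiff.div
  · exact Real.contDiff_exp.comp contDiff_neg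
  · exact Real.contDiff_cosh.comp (contDiff_const.mul contDiff_id)
  · intro x; exact (Real.cosh_pos _).ne'

lemma contDiff_phiAR : ContDiff ℝ ∞ phiAR := by
  apply ContDiff.div
  · exact contDiff_const
  · exact Real.contDiff_cosh.comp (contDiff_const.mul contDiff_id)
  · intro x; exact (Real.cosh_pos _).ne'

lemma contDiff_iteratedDeriv_of_top {φ : ℝ → ℝ} (hφ : ContDiff ℝ ∞ φ) (n : ℕ) :
    ContDiff ℝ ∞ (iteratedDeriv n φ) := by
  rw [iteratedDeriv_eq_iterate]; exact hφ.iterate_deriv n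

/-- the auxiliary double family `F φ m n = ∂^m_x (e^{-x} φ^{(n)}(x)) |_{x=0}` -/
noncomputable def FD (φ : ℝ → ℝ) (m n : ℕ) : ℝ :=
  iteratedDeriv m (fun x => Real.exp (-x) * iteratedDeriv n φ x) 0

lemma contDiff_expmul {φ : ℝ → ℝ} (hφ : ContDiff ℝ ∞ φ) (n : ℕ) :
    ContDiff ℝ ∞ (fun x => Real.exp (-x) * iteratedDeriv n φ x) :=
  (Real.contDiff_exp.comp contDiff_neg).mul (contDiff_iteratedDeriv_of_top hφ n)

lemma iteratedDeriv_add' {f g : ℝ → ℝ} (hf : ContDiff ℝ ∞ f) (hg : ContDiff ℝ ∞ g)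
    (m : ℕ) (x : ℝ) :
    iteratedDeriv m (fun x => f x + g x) x = iteratedDeriv m f x + iteratedDeriv m g x := by
  simp only [iteratedDeriv_eq_iteratedFDeriv]
  rw [show (fun x => f x + g x) = f + g from rfl,
    iteratedFDeriv_add_apply (cd_nat hf m).contDiffAt (cd_nat hg m).contDiffAt]
  simp

lemma iteratedDeriv_cmul {f : ℝ → ℝ} (hf : ContDiff ℝ ∞ f) (c : ℝ) (n : ℕ) (x : ℝ) :
    iteratedDeriv n (fun z => c * f z) x = c * iteratedDeriv n f x := by
  rw [← iteratedDerivWithin_univ, ← iteratedDerivWithin_univ]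
  exact iteratedDerivWithin_const_mul (Set.mem_univ x) uniqueDiffOn_univ c
    (cd_nat hf n).contDiffWithinAt

lemma iteratedDeriv_const_sub' {f : ℝ → ℝ} (n : ℕ) (hn : 0 < n) (c : ℝ) (x : ℝ) :
    iteratedDeriv n (fun z => c - f z) x = - iteratedDeriv n f x := by
  rw [← iteratedDerivWithin_univ, ← iteratedDerivWithin_univ,
    iteratedDerivWithin_const_sub hn c,
    iteratedDerivWithin_fun_neg]

/-- inner derivative computation -/
lemma inner_iteratedDeriv {φ : ℝ → ℝ} (hφ : ContDiff ℝ ∞ φ) (n : ℕ) (x : ℝ) :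
    iteratedDeriv n (fun y => Real.exp (-x) * φ (x + y)) 0
      = Real.exp (-x) * iteratedDeriv n φ x := by
  have h1 : ContDiff ℝ ∞ (fun y : ℝ => φ (x + y)) :=
    hφ.comp (contDiff_const.add contDiff_id)
  rw [iteratedDeriv_cmul h1 (Real.exp (-x)) n, iteratedDeriv_comp_const_add n φ x]
  simp

lemma FD_rec {φ : ℝ → ℝ} (hφ : ContDiff ℝ ∞ φ) (m n : ℕ) :
    FD φ m (n + 1) = FD φ (m + 1) n + FD φ m n := by
  set f : ℝ → ℝ := fun x => Real.exp (-x) * iteratedDeriv n φ x with hfdef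
  have hf : ContDiff ℝ ∞ f := contDiff_expmul hφ n
  have hdf : ContDiff ℝ ∞ (deriv f) := (contDiff_infty_iff_deriv.mp hf).2
  have hd : ∀ x, deriv f x
      = -(Real.exp (-x) * iteratedDeriv n φ x) + Real.exp (-x) * iteratedDeriv (n + 1) φ x := by
    intro x
    have h1 : HasDerivAt (fun x : ℝ => Real.exp (-x)) (-Real.exp (-x)) x := by
      simpa using (hasDerivAt_neg x).exp
    have h2 : HasDerivAt (iteratedDeriv n φ) (iteratedDeriv (n + 1) φ x) x := by
      rw [iteratedDeriv_succ]
      exact (((contDiff_iteratedDeriv_of_top hφ n).differentiable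
        (by simp)) x).hasDerivAt
    have := (h1.mul h2).deriv
    rw [show f = (fun x => Real.exp (-x)) * iteratedDeriv n φ from rfl, this]; ring
  have key : (fun x => Real.exp (-x) * iteratedDeriv (n + 1) φ x)
      = fun x => deriv f x + f x := by
    funext x; rw [hd x]; simp only [hfdef]; ring
  show iteratedDeriv m (fun x => Real.exp (-x) * iteratedDeriv (n + 1) φ x) 0 = _
  rw [key, iteratedDeriv_add' hdf hf m 0]
  have : iteratedDeriv m (deriv f) 0 = iteratedDeriv (m + 1) f 0 := by
    rw [iteratedDeriv_succ']
  rw [this]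
  rfl

lemma FD_zero_left (φ : ℝ → ℝ) (n : ℕ) : FD φ 0 n = iteratedDeriv n φ 0 := by
  simp [FD]

lemma iteratedDeriv_odd_even_fn {f : ℝ → ℝ} (hsym : ∀ x, f (-x) = f x) {n : ℕ}
    (hn : Odd n) : iteratedDeriv n f 0 = 0 := by
  have h := iteratedDeriv_comp_neg n f 0
  rw [show (fun x : ℝ => f (-x)) = f from funext hsym, neg_zero, hn.neg_one_pow] at h
  simp only [neg_smul, one_smul] at h
  linarith

lemma FD_R_eq_L (m : ℕ) : FD phiAR m 0 = iteratedDeriv m phiAL 0 := by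
  unfold FD
  rw [show (fun x => Real.exp (-x) * iteratedDeriv 0 phiAR x) = phiAL by
    funext x
    simp only [iteratedDeriv_zero, phiAR, phiAL, mul_one_div]]

lemma FD_L_even_zero (m : ℕ) (hm : 0 < m) (hme : Even m) : FD phiAL m 0 = 0 := by
  unfold FD
  simp only [iteratedDeriv_zero]
  set g : ℝ → ℝ := fun x => Real.exp (-x) * phiAL x with hgdef
  have hkey : ∀ x, g x = 2 - g (-x) := by
    intro x
    have hc : Real.cosh (2 * x) ≠ 0 := (Real.cosh_pos _).ne'
    have hcn : Real.cosh (2 * -x) = Real.cosh (2 * x) := by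
      rw [show (2 : ℝ) * -x = -(2 * x) by ring, Real.cosh_neg]
    have e2 : Real.exp (-x) * Real.exp (-x) = Real.exp (-(2 * x)) := by
      rw [← Real.exp_add]; ring_nf
    have e3 : Real.exp x * Real.exp x = Real.exp (2 * x) := by
      rw [← Real.exp_add]; ring_nf
    have hsum : g x + g (-x) = 2 := by
      simp only [hgdef, phiAL, hcn, neg_neg, mul_div_assoc']
      rw [e2, e3, ← add_div, Real.cosh_eq]
      have h2x : Real.exp (2 * x) + Real.exp (-(2 * x)) ≠ 0 := by positivity
      field_simp
      ring
    linarith [hsum]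
  have h1 : iteratedDeriv m g 0 = iteratedDeriv m (fun x => 2 - g (-x)) 0 := by
    congr 1; funext x; rw [hkey x]
  rw [iteratedDeriv_const_sub' m hm 2 0, iteratedDeriv_comp_neg m g 0, neg_zero,
    hme.neg_one_pow, one_smul] at h1
  linarith [h1]

lemma phiAR_even : ∀ x : ℝ, phiAR (-x) = phiAR x := by
  intro x
  simp only [phiAR]
  rw [show (2 : ℝ) * -x = -(2 * x) by ring, Real.cosh_neg]

lemma phiAL_zero : phiAL 0 = 1 := by simp [phiAL]

lemma phiAR_zero : phiAR 0 = 1 := by simp [phiAR]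

lemma FD_R_odd_zero (n : ℕ) (hn : Odd n) : FD phiAR 0 n = 0 := by
  rw [FD_zero_left]
  exact iteratedDeriv_odd_even_fn phiAR_even hn

lemma FD_diag_eq (m : ℕ) : FD phiAL 0 m = FD phiAR m 0 := by
  rw [FD_zero_left, FD_R_eq_L]

lemma convL (m n : ℕ) :
    iteratedDeriv m (fun x => iteratedDeriv n
      (fun y => Real.exp (-2 * x - y) / Real.cosh (2 * (x + y))) 0) 0 = FD phiAL m n := by
  unfold FD
  congr 1
  funext x
  have h : (fun y => Real.exp (-2 * x - y) / Real.cosh (2 * (x + y)))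
      = fun y => Real.exp (-x) * phiAL (x + y) := by
    funext y
    simp only [phiAL, mul_div_assoc']
    rw [← Real.exp_add]
    ring_nf
  rw [h, inner_iteratedDeriv contDiff_phiAL n x]

lemma convR (m n : ℕ) :
    iteratedDeriv m (fun x => iteratedDeriv n
      (fun y => Real.exp (-x) / Real.cosh (2 * (x + y))) 0) 0 = FD phiAR m n := by
  unfold FD
  congr 1
  funext x
  have h : (fun y => Real.exp (-x) / Real.cosh (2 * (x + y)))
      = fun y => Real.exp (-x) * phiAR (x + y) := by
    funext y
    simp only [phiAR, mul_one_div]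
  rw [h, inner_iteratedDeriv contDiff_phiAR n x]

lemma D_step (φ : ℝ → ℝ) (hφ : ContDiff ℝ ∞ φ) (i j : ℕ) (h2 : 2 ≤ j) (hji : j ≤ i) :
    FD φ (i - j) (j - 1) =
      FD φ (i - (j - 1)) (j - 1 - 1) + FD φ ((i - 1) - (j - 1)) (j - 1 - 1) := by
  obtain ⟨n, rfl⟩ : ∃ n, j = n + 2 := ⟨j - 2, by omega⟩
  obtain ⟨m, rfl⟩ : ∃ m, i = n + 2 + m := ⟨i - (n + 2), by omega⟩
  rw [show n + 2 + m - (n + 2) = m by omega, show n + 2 - 1 = n + 1 by omega,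
    show n + 2 + m - (n + 1) = m + 1 by omega, show n + 1 - 1 = n by omega,
    show n + 2 + m - 1 - (n + 1) = m by omega]
  exact FD_rec hφ m n

lemma const_of_step (e : ℕ → ℝ) (i : ℕ) (h : ∀ j, 2 ≤ j → j ≤ i → e j = e (j - 1)) :
    ∀ j, 1 ≤ j → j ≤ i → e j = e 1 := by
  intro j
  induction j with
  | zero => intro h1; omega
  | succ j ih =>
    intro h1 h2
    rcases Nat.eq_zero_or_pos j with hj0 | hj1
    · subst hj0; rfl
    · have hstep := h (j + 1) (by omega) h2
      rw [show j + 1 - 1 = j by omega] at hstep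
      rw [hstep]
      exact ih hj1 (by omega)



/-- the sign `(-1)^{(i-1)(i-2)/2}`. -/
noncomputable def sgnA (i : ℕ) : ℝ := (-1 : ℝ) ^ ((i - 1) * (i - 2) / 2)

/-- Arnold's pair of triangles `L(β), R(β)` for Euler–Springer numbers: if the signed
families `(-1)^{(i-1)(i-2)/2} β^L_{i,j}` and `(-1)^{(i-1)(i-2)/2} β^R_{i,j}` are Seidel
triangles satisfying the stated periodic boundary conditions, then their exponential
generating functions are `e^{-2x-y}/cosh 2(x+y)` and `e^{-x}/cosh 2(x+y)`. -/
theorem arnold_beta_egf (βL βR : ℕ → ℕ → ℝ)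
    (hrecL : ∀ i j : ℕ, 2 ≤ j → j ≤ i →
      sgnA i * βL i j = sgnA i * βL i (j - 1) + sgnA (i - 1) * βL (i - 1) (j - 1))
    (hrecR : ∀ i j : ℕ, 2 ≤ j → j ≤ i →
      sgnA i * βR i j = sgnA i * βR i (j - 1) + sgnA (i - 1) * βR (i - 1) (j - 1))
    (hL11 : βL 1 1 = 1)
    (hLodd : ∀ k : ℕ, 1 ≤ k → βL (2 * k + 1) 1 = 0)
    (hLR : ∀ k : ℕ, 1 ≤ k → βL k k = βR k 1)
    (hReven : ∀ k : ℕ, 1 ≤ k → βR (2 * k) (2 * k) = 0) :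
    ∀ i j : ℕ, 1 ≤ i → 1 ≤ j → j ≤ i →
      sgnA i * βL i j =
        iteratedDeriv (i - j)
          (fun x => iteratedDeriv (j - 1)
            (fun y => Real.exp (-2 * x - y) / Real.cosh (2 * (x + y))) 0) 0 ∧
      sgnA i * βR i j =
        iteratedDeriv (i - j)
          (fun x => iteratedDeriv (j - 1)
            (fun y => Real.exp (-x) / Real.cosh (2 * (x + y))) 0) 0 := by
  have key : ∀ i : ℕ, 1 ≤ i → ∀ j : ℕ, 1 ≤ j → j ≤ i →
      sgnA i * βL i j = FD phiAL (i - j) (j - 1) ∧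
      sgnA i * βR i j = FD phiAR (i - j) (j - 1) := by
    intro i hi
    induction i, hi using Nat.le_induction with
    | base =>
      intro j hj hji
      have hj1 : j = 1 := by omega
      subst hj1
      have hs : sgnA 1 = 1 := by simp [sgnA]
      have hD : FD phiAL 0 0 = 1 := by
        rw [FD_zero_left]
        simp [iteratedDeriv_zero, phiAL_zero]
      have hDR : FD phiAR 0 0 = 1 := by
        rw [FD_zero_left]
        simp [iteratedDeriv_zero, phiAR_zero]
      constructor
      · simpa [hs, hL11] using hD.symm
      · rw [hs, one_mul, ← hLR 1 le_rfl, hL11]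
        simpa using hDR.symm
    | succ i hi IH =>
      -- step properties for the difference sequences
      have stepL : ∀ j, 2 ≤ j → j ≤ i + 1 →
          (fun j => sgnA (i + 1) * βL (i + 1) j - FD phiAL (i + 1 - j) (j - 1)) j
            = (fun j => sgnA (i + 1) * βL (i + 1) j - FD phiAL (i + 1 - j) (j - 1)) (j - 1) := by
        intro j h2 hji
        simp only
        have hr := hrecL (i + 1) j h2 hji
        have hd := D_step phiAL contDiff_phiAL (i + 1) j h2 hji
        have e1 : i + 1 - 1 = i := by omega
        rw [e1] at hr hd
        have hIH := (IH (j - 1) (by omega) (by omega)).1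
        rw [show i + 1 - (j - 1) = i + 1 - j + 1 by omega] at hd
        rw [show i + 1 - (j - 1) = i + 1 - j + 1 by omega, show (j - 1 : ℕ) - 1 = j - 2 by omega]
        rw [show (j - 1 : ℕ) - 1 = j - 2 by omega] at hd
        rw [show (j - 1 : ℕ) - 1 = j - 2 by omega] at hIH
        linarith [hr, hd, hIH]
      have stepR : ∀ j, 2 ≤ j → j ≤ i + 1 →
          (fun j => sgnA (i + 1) * βR (i + 1) j - FD phiAR (i + 1 - j) (j - 1)) j
            = (fun j => sgnA (i + 1) * βR (i + 1) j - FD phiAR (i + 1 - j) (j - 1)) (j - 1) := by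
        intro j h2 hji
        simp only
        have hr := hrecR (i + 1) j h2 hji
        have hd := D_step phiAR contDiff_phiAR (i + 1) j h2 hji
        have e1 : i + 1 - 1 = i := by omega
        rw [e1] at hr hd
        have hIH := (IH (j - 1) (by omega) (by omega)).2
        rw [show i + 1 - (j - 1) = i + 1 - j + 1 by omega] at hd
        rw [show i + 1 - (j - 1) = i + 1 - j + 1 by omega, show (j - 1 : ℕ) - 1 = j - 2 by omega]
        rw [show (j - 1 : ℕ) - 1 = j - 2 by omega] at hd
        rw [show (j - 1 : ℕ) - 1 = j - 2 by omega] at hIH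
        linarith [hr, hd, hIH]
      have cL := const_of_step _ (i + 1) stepL
      have cR := const_of_step _ (i + 1) stepR
      -- the diagonal identity FD phiAL 0 i = FD phiAR i 0 and index simplifications
      have ediag1 : i + 1 - (i + 1) = 0 := by omega
      have ediag2 : i + 1 - 1 = i := by omega
      rcases Nat.even_or_odd (i + 1) with he | ho
      · -- i + 1 even: start from the right triangle's diagonal
        obtain ⟨k, hk⟩ := he
        have hk1 : 1 ≤ k := by omega
        have hRdiag : sgnA (i + 1) * βR (i + 1) (i + 1) - FD phiAR (i + 1 - (i + 1)) (i + 1 - 1)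
            = 0 := by
          rw [ediag1, ediag2, show i + 1 = 2 * k by omega, hReven k hk1,
            FD_R_odd_zero _ (by rw [show i = 2 * k - 1 by omega]; exact Nat.odd_iff.mpr (by omega))]
          ring
        have hR1 : sgnA (i + 1) * βR (i + 1) 1 - FD phiAR (i + 1 - 1) (1 - 1) = 0 := by
          have h := cR (i + 1) (by omega) le_rfl
          rw [hRdiag] at h
          linarith [h]
        have hRall : ∀ j, 1 ≤ j → j ≤ i + 1 →
            sgnA (i + 1) * βR (i + 1) j = FD phiAR (i + 1 - j) (j - 1) := by
          intro j h1 h2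
          have := cR j h1 h2
          linarith [this, hR1]
        have hLdiag : sgnA (i + 1) * βL (i + 1) (i + 1) - FD phiAL (i + 1 - (i + 1)) (i + 1 - 1)
            = 0 := by
          rw [ediag1, ediag2, hLR (i + 1) (by omega)]
          have h := hRall 1 le_rfl (by omega)
          rw [ediag2] at h
          rw [h, show (1 : ℕ) - 1 = 0 by omega, FD_diag_eq]
          ring
        have hLall : ∀ j, 1 ≤ j → j ≤ i + 1 →
            sgnA (i + 1) * βL (i + 1) j = FD phiAL (i + 1 - j) (j - 1) := by
          intro j h1 h2
          have hcj := cL j h1 h2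
          have hci := cL (i + 1) (by omega) le_rfl
          rw [hLdiag] at hci
          linarith [hcj, hci]
        intro j hj hji
        exact ⟨hLall j hj hji, hRall j hj hji⟩
      · -- i + 1 odd: start from the left triangle's first column
        obtain ⟨k, hk⟩ := ho
        have hk1 : 1 ≤ k := by omega
        have hL1 : sgnA (i + 1) * βL (i + 1) 1 - FD phiAL (i + 1 - 1) (1 - 1) = 0 := by
          rw [ediag2, show (1 : ℕ) - 1 = 0 by omega, show i + 1 = 2 * k + 1 by omega,
            hLodd k hk1, FD_L_even_zero i (by omega) (by
              rw [show i = 2 * k by omega]; exact even_two_mul k)]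
          ring
        have hLall : ∀ j, 1 ≤ j → j ≤ i + 1 →
            sgnA (i + 1) * βL (i + 1) j = FD phiAL (i + 1 - j) (j - 1) := by
          intro j h1 h2
          have := cL j h1 h2
          linarith [this, hL1]
        have hR1 : sgnA (i + 1) * βR (i + 1) 1 - FD phiAR (i + 1 - 1) (1 - 1) = 0 := by
          rw [ediag2, show (1 : ℕ) - 1 = 0 by omega, ← hLR (i + 1) (by omega)]
          have h := hLall (i + 1) (by omega) le_rfl
          rw [ediag1, ediag2] at h
          rw [h, FD_diag_eq]
          ring
        have hRall : ∀ j, 1 ≤ j → j ≤ i + 1 →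
            sgnA (i + 1) * βR (i + 1) j = FD phiAR (i + 1 - j) (j - 1) := by
          intro j h1 h2
          have := cR j h1 h2
          linarith [this, hR1]
        intro j hj hji
        exact ⟨hLall j hj hji, hRall j hj hji⟩
  intro i j hi hj hji
  obtain ⟨h1, h2⟩ := key i hi j hj hji
  rw [convL (i - j) (j - 1), convR (i - j) (j - 1)]
  exact ⟨h1, h2⟩
end

section
/- Let (b^L_{i,j}) and (b^R_{i,j}) (i≥1, 1≤j≤i) be families of real numbers such that both signed families ((−1)^{i(i−1)/2}b^L_{i,j}) and ((−1)^{i(i−1)/2}b^R_{i,j}) are Seidel triangles, and such that b^L_{2k+1,1}=0 for all k≥0, b^L_{k,k}=b^R_{k,1} for all k≥2, b^R_{1,1}=1, and b^R_{2k,2k}=0 for all k≥1. Then for all i≥1, 1≤j≤i: (−1)^{i(i−1)/2}b^L_{i,j} = (∂_x^{i−j}∂_y^{j−1}G_L)(0,0) with G_L(x,y)=−e^y·sinh(x+y)/cosh(2(x+y)), and (−1)^{i(i−1)/2}b^R_{i,j} = (∂_x^{i−j}∂_y^{j−1}G_R)(0,0) with G_R(x,y)=e^{−x}·cosh(x+y)/cosh(2(x+y)).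 -/
open Finset
open scoped ContDiff


/-- the sign `(-1)^{i(i-1)/2}`. -/
noncomputable def sgnB (i : ℕ) : ℝ := (-1 : ℝ) ^ (i * (i - 1) / 2)

namespace ArnoldBAux

noncomputable def Sf (u : ℝ) : ℝ := Real.sinh u / Real.cosh (2*u)
noncomputable def Cf (u : ℝ) : ℝ := Real.cosh u / Real.cosh (2*u)

lemma contDiff_Sf : ContDiff ℝ ∞ Sf :=
  Real.contDiff_sinh.div ((Real.contDiff_cosh).comp (contDiff_const.mul contDiff_id))
    (fun x => (Real.cosh_pos _).ne')

lemma contDiff_Cf : ContDiff ℝ ∞ Cf :=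
  Real.contDiff_cosh.div ((Real.contDiff_cosh).comp (contDiff_const.mul contDiff_id))
    (fun x => (Real.cosh_pos _).ne')

lemma smooth_iter {f : ℝ → ℝ} (hf : ContDiff ℝ ∞ f) (m : ℕ) :
    ContDiff ℝ ∞ (iteratedDeriv m f) := by
  rw [iteratedDeriv_eq_iterate]; exact hf.iterate_deriv m

lemma diff_iter {f : ℝ → ℝ} (hf : ContDiff ℝ ∞ f) (m : ℕ) :
    Differentiable ℝ (iteratedDeriv m f) :=
  (smooth_iter hf m).differentiable (by simp)

lemma hasDerivAt_iter {f : ℝ → ℝ} (hf : ContDiff ℝ ∞ f) (m : ℕ) (z : ℝ) :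
    HasDerivAt (iteratedDeriv m f) (iteratedDeriv (m+1) f z) z := by
  rw [iteratedDeriv_succ]
  exact ((diff_iter hf m) z).hasDerivAt

lemma iter_iter (f : ℝ → ℝ) (n m : ℕ) :
    iteratedDeriv n (iteratedDeriv m f) = iteratedDeriv (n + m) f := by
  induction n with
  | zero => simp
  | succ n ih => rw [iteratedDeriv_succ, ih, ← iteratedDeriv_succ, Nat.add_right_comm]

lemma choose_split (n : ℕ) (g : ℕ → ℝ) :
    ∑ p ∈ range (n+2), ((n+1).choose p : ℝ) * g p
      = ∑ p ∈ range (n+1), (n.choose p : ℝ) * g p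
        + ∑ p ∈ range (n+1), (n.choose p : ℝ) * g (p+1) := by
  rw [Finset.sum_range_succ' (fun p => ((n+1).choose p : ℝ) * g p) (n+1)]
  have h1 : ∀ p ∈ range (n+1), ((n+1).choose (p+1) : ℝ) * g (p+1)
      = (n.choose p : ℝ) * g (p+1) + (n.choose (p+1) : ℝ) * g (p+1) := by
    intro p _
    rw [Nat.choose_succ_succ]
    push_cast
    ring
  rw [Finset.sum_congr rfl h1, Finset.sum_add_distrib]
  have h2 : ∑ p ∈ range (n+1), ((n.choose (p+1)) : ℝ) * g (p+1) + ((n+1).choose 0 : ℝ) * g 0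
      = ∑ p ∈ range (n+1), (n.choose p : ℝ) * g p := by
    rw [show ((n+1).choose 0 : ℝ) * g 0 = (n.choose 0 : ℝ) * g 0 by norm_num]
    rw [← Finset.sum_range_succ' (fun p => (n.choose p : ℝ) * g p) (n+1),
      Finset.sum_range_succ]
    simp [Nat.choose_succ_self]
  linarith [h2]

lemma leibniz_exp {f : ℝ → ℝ} (hf : ContDiff ℝ ∞ f) (b : ℝ) (n : ℕ) (z : ℝ) :
    iteratedDeriv n (fun x => Real.exp (b*x) * f x) z
      = Real.exp (b*z) * ∑ p ∈ range (n+1), (n.choose p : ℝ) * b^(n-p) * iteratedDeriv p f z := by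
  induction n generalizing z with
  | zero => simp
  | succ n ih =>
    rw [iteratedDeriv_succ]
    have hfun : iteratedDeriv n (fun x => Real.exp (b*x) * f x)
        = fun z => Real.exp (b*z) * ∑ p ∈ range (n+1), (n.choose p : ℝ) * b^(n-p) * iteratedDeriv p f z :=
      funext ih
    rw [hfun]
    have hexp : HasDerivAt (fun z : ℝ => Real.exp (b*z)) (b * Real.exp (b*z)) z := by
      have := (Real.hasDerivAt_exp (b*z)).comp z ((hasDerivAt_id z).const_mul b)
      simpa [mul_comm, Function.comp_def] using this
    have hsum : HasDerivAt (fun z => ∑ p ∈ range (n+1), (n.choose p : ℝ) * b^(n-p) * iteratedDeriv p f z)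
        (∑ p ∈ range (n+1), (n.choose p : ℝ) * b^(n-p) * iteratedDeriv (p+1) f z) z := by
      apply HasDerivAt.fun_sum
      intro p _
      exact (hasDerivAt_iter hf p z).const_mul _
    have h := hexp.fun_mul hsum
    rw [h.deriv]
    have key := choose_split n (fun p => b^(n+1-p) * iteratedDeriv p f z)
    have e1 : ∑ p ∈ range (n+1), (n.choose p : ℝ) * (b^(n+1-p) * iteratedDeriv p f z)
        = b * ∑ p ∈ range (n+1), (n.choose p : ℝ) * (b^(n-p) * iteratedDeriv p f z) := by
      rw [Finset.mul_sum]
      apply Finset.sum_congr rfl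
      intro p hp
      have : n + 1 - p = (n - p) + 1 := by
        have := Finset.mem_range.mp hp; omega
      rw [this, pow_succ]
      ring
    have e2 : ∑ p ∈ range (n+1), (n.choose p : ℝ) * (b^(n+1-(p+1)) * iteratedDeriv (p+1) f z)
        = ∑ p ∈ range (n+1), (n.choose p : ℝ) * (b^(n-p) * iteratedDeriv (p+1) f z) := by
      apply Finset.sum_congr rfl
      intro p _
      have : n + 1 - (p+1) = n - p := by omega
      rw [this]
    rw [e1, e2] at key
    rw [show n+1+1 = n+2 from rfl]
    simp_rw [mul_assoc]
    rw [key]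
    ring

lemma iter_sum {N : ℝ → ℝ} (hN : ContDiff ℝ ∞ N) (m : ℕ) (c : ℕ → ℝ) (n : ℕ) (z : ℝ) :
    iteratedDeriv n (fun x => ∑ q ∈ range m, c q * iteratedDeriv q N x) z
      = ∑ q ∈ range m, c q * iteratedDeriv (n+q) N z := by
  induction n generalizing z with
  | zero => simp
  | succ n ih =>
    rw [iteratedDeriv_succ]
    have hfun : iteratedDeriv n (fun x => ∑ q ∈ range m, c q * iteratedDeriv q N x)
        = fun z => ∑ q ∈ range m, c q * iteratedDeriv (n+q) N z := funext ih
    rw [hfun]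
    have hsum : HasDerivAt (fun z => ∑ q ∈ range m, c q * iteratedDeriv (n+q) N z)
        (∑ q ∈ range m, c q * iteratedDeriv (n+q+1) N z) z := by
      apply HasDerivAt.fun_sum
      intro q _
      exact (hasDerivAt_iter hN (n+q) z).const_mul _
    rw [hsum.deriv]
    apply Finset.sum_congr rfl
    intro q _
    rw [show n+q+1 = n+1+q by omega]

noncomputable def FL (n m : ℕ) : ℝ :=
  ∑ q ∈ range (m+1), (-(m.choose q : ℝ)) * iteratedDeriv (n+q) Sf 0

noncomputable def FR (n m : ℕ) : ℝ :=
  ∑ p ∈ range (n+1), ((n.choose p : ℝ) * (-1)^(n-p)) * iteratedDeriv (m+p) Cf 0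

lemma formL (n m : ℕ) :
    iteratedDeriv n (fun x => iteratedDeriv m
        (fun y => -(Real.exp y * Real.sinh (x + y)) / Real.cosh (2 * (x + y))) 0) 0
      = FL n m := by
  unfold FL
  have hinner : ∀ x : ℝ, iteratedDeriv m
      (fun y => -(Real.exp y * Real.sinh (x + y)) / Real.cosh (2 * (x + y))) 0
      = ∑ q ∈ range (m+1), (-(m.choose q : ℝ)) * iteratedDeriv q Sf x := by
    intro x
    have hre : (fun y => -(Real.exp y * Real.sinh (x + y)) / Real.cosh (2 * (x + y)))
        = fun y => Real.exp (1*y) * (fun y => -Sf (x + y)) y := by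
      funext y
      simp only [Sf, one_mul]
      ring
    rw [hre, leibniz_exp (by
      exact (contDiff_Sf.neg).comp (contDiff_const.add contDiff_id)) 1 m 0]
    have htr : ∀ q : ℕ, iteratedDeriv q (fun y => -Sf (x + y)) 0 = -(iteratedDeriv q Sf x) := by
      intro q
      have : (fun y => -Sf (x + y)) = fun y => (fun u => -Sf u) (x + y) := rfl
      rw [this, iteratedDeriv_comp_const_add q (fun u => -Sf u) x]
      simp [iteratedDeriv_neg]
    simp only [htr, mul_zero, Real.exp_zero, one_pow, one_mul]
    apply Finset.sum_congr rfl
    intro q _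
    ring
  rw [funext hinner, iter_sum contDiff_Sf (m+1) _ n 0]

lemma formR (n m : ℕ) :
    iteratedDeriv n (fun x => iteratedDeriv m
        (fun y => Real.exp (-x) * Real.cosh (x + y) / Real.cosh (2 * (x + y))) 0) 0
      = FR n m := by
  unfold FR
  have hN : ∀ x : ℝ, ContDiff ℝ ∞ (fun y : ℝ => Cf (x + y)) := fun x =>
    contDiff_Cf.comp (contDiff_const.add contDiff_id)
  have hinner : ∀ x : ℝ, iteratedDeriv m
      (fun y => Real.exp (-x) * Real.cosh (x + y) / Real.cosh (2 * (x + y))) 0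
      = Real.exp (-x) * iteratedDeriv m Cf x := by
    intro x
    have hre : (fun y => Real.exp (-x) * Real.cosh (x + y) / Real.cosh (2 * (x + y)))
        = fun y => ∑ q ∈ range 1, (fun _ : ℕ => Real.exp (-x)) q
            * iteratedDeriv q (fun y : ℝ => Cf (x + y)) y := by
      funext y
      simp only [range_one, sum_singleton, iteratedDeriv_zero, Cf]
      ring
    rw [hre, iter_sum (hN x) 1 _ m 0]
    simp only [range_one, sum_singleton]
    rw [iteratedDeriv_comp_const_add (m+0) Cf x]
    simp
  rw [funext hinner]
  have hre2 : (fun x => Real.exp (-x) * iteratedDeriv m Cf x)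
      = fun x => Real.exp ((-1)*x) * (iteratedDeriv m Cf) x := by
    funext x; rw [neg_one_mul]
  rw [hre2, leibniz_exp (smooth_iter contDiff_Cf m) (-1) n 0]
  simp only [mul_zero, Real.exp_zero, one_mul, iter_iter]
  apply Finset.sum_congr rfl
  intro p _
  rw [Nat.add_comm p m]

lemma sc_even (k : ℕ) : iteratedDeriv (2*k) Sf 0 = 0 := by
  have h1 := iteratedDeriv_comp_neg (2*k) Sf 0
  have h2 : (fun x : ℝ => Sf (-x)) = fun x => -(Sf x) := by
    funext x
    simp [Sf, Real.sinh_neg, mul_neg, Real.cosh_neg, neg_div]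
  rw [h2] at h1
  rw [iteratedDeriv_fun_neg] at h1
  simp only [neg_zero, smul_eq_mul] at h1
  have h3 : ((-1 : ℝ)) ^ (2*k) = 1 := by
    rw [pow_mul]; norm_num
  rw [h3, one_mul] at h1
  linarith

lemma cc_odd (k : ℕ) : iteratedDeriv (2*k+1) Cf 0 = 0 := by
  have h1 := iteratedDeriv_comp_neg (2*k+1) Cf 0
  have h2 : (fun x : ℝ => Cf (-x)) = Cf := by
    funext x
    simp [Cf, Real.cosh_neg, mul_neg]
  rw [h2] at h1
  simp only [neg_zero, smul_eq_mul] at h1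
  have h3 : ((-1 : ℝ)) ^ (2*k+1) = -1 := by
    rw [pow_succ, pow_mul]; norm_num
  rw [h3] at h1
  linarith

lemma bdyLR (t : ℕ) :
    iteratedDeriv 0 (fun x => iteratedDeriv (t+1)
        (fun y => -(Real.exp y * Real.sinh (x + y)) / Real.cosh (2 * (x + y))) 0) 0
      = iteratedDeriv (t+1) (fun x => iteratedDeriv 0
        (fun y => Real.exp (-x) * Real.cosh (x + y) / Real.cosh (2 * (x + y))) 0) 0 := by
  rw [iteratedDeriv_zero]
  simp only [iteratedDeriv_zero]
  rw [iteratedDeriv_succ', iteratedDeriv_succ']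
  congr 1
  funext x
  have hpt : ∀ x : ℝ, Real.exp (-x) * Real.cosh (x + 0) / Real.cosh (2 * (x + 0))
      = -(Real.exp x * Real.sinh (0 + x)) / Real.cosh (2 * (0 + x)) + 1 := by
    intro x
    simp only [zero_add, add_zero]
    rw [Real.cosh_eq, Real.sinh_eq, Real.cosh_eq, Real.exp_neg, two_mul, Real.exp_add,
      Real.exp_neg, Real.exp_add]
    have h2 : Real.exp x * Real.exp x + (Real.exp x * Real.exp x)⁻¹ ≠ 0 := by
      positivity
    field_simp
    ring
  have heq : (fun x : ℝ => Real.exp (-x) * Real.cosh (x + 0) / Real.cosh (2 * (x + 0)))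
      = fun x => -(Real.exp x * Real.sinh (0 + x)) / Real.cosh (2 * (0 + x)) + 1 :=
    funext hpt
  rw [heq, deriv_add_const]

lemma bdy (t : ℕ) : FL 0 (t+1) = FR (t+1) 0 := by
  rw [← formL 0 (t+1), ← formR (t+1) 0, bdyLR]

lemma FL_rec (n t : ℕ) : FL n (t+1) = FL (n+1) t + FL n t := by
  unfold FL
  have key := choose_split t (fun q => -(iteratedDeriv (n+q) Sf 0))
  have e0 : ∑ q ∈ range (t+2), (-(((t+1).choose q) : ℝ)) * iteratedDeriv (n+q) Sf 0
      = ∑ q ∈ range (t+2), (((t+1).choose q) : ℝ) * (-(iteratedDeriv (n+q) Sf 0)) := by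
    apply Finset.sum_congr rfl; intro q _; ring
  have e1 : ∑ q ∈ range (t+1), (-((t.choose q) : ℝ)) * iteratedDeriv (n+q) Sf 0
      = ∑ q ∈ range (t+1), ((t.choose q) : ℝ) * (-(iteratedDeriv (n+q) Sf 0)) := by
    apply Finset.sum_congr rfl; intro q _; ring
  have e2 : ∑ q ∈ range (t+1), (-((t.choose q) : ℝ)) * iteratedDeriv (n+1+q) Sf 0
      = ∑ q ∈ range (t+1), ((t.choose q) : ℝ) * (-(iteratedDeriv (n+(q+1)) Sf 0)) := by
    apply Finset.sum_congr rfl; intro q _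
    rw [show n+(q+1) = n+1+q by omega]; ring
  rw [show t+1+1 = t+2 from rfl, e0, e1, e2, key]
  ring

lemma FR_rec (n t : ℕ) : FR n (t+1) = FR (n+1) t + FR n t := by
  unfold FR
  have key := choose_split n (fun p => (-1:ℝ)^(n+1-p) * iteratedDeriv (t+p) Cf 0)
  have e0 : ∑ p ∈ range (n+2), (((n+1).choose p : ℝ) * (-1)^(n+1-p)) * iteratedDeriv (t+p) Cf 0
      = ∑ p ∈ range (n+2), ((n+1).choose p : ℝ) * ((-1:ℝ)^(n+1-p) * iteratedDeriv (t+p) Cf 0) := by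
    apply Finset.sum_congr rfl; intro p _; ring
  have e1 : ∑ p ∈ range (n+1), (n.choose p : ℝ) * ((-1:ℝ)^(n+1-p) * iteratedDeriv (t+p) Cf 0)
      = -∑ p ∈ range (n+1), ((n.choose p : ℝ) * (-1)^(n-p)) * iteratedDeriv (t+p) Cf 0 := by
    rw [← Finset.sum_neg_distrib]
    apply Finset.sum_congr rfl; intro p hp
    have hpn : p ≤ n := by have := Finset.mem_range.mp hp; omega
    rw [show n+1-p = (n-p)+1 by omega, pow_succ]
    ring
  have e2 : ∑ p ∈ range (n+1), (n.choose p : ℝ) * ((-1:ℝ)^(n+1-(p+1)) * iteratedDeriv (t+(p+1)) Cf 0)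
      = ∑ p ∈ range (n+1), ((n.choose p : ℝ) * (-1)^(n-p)) * iteratedDeriv (t+1+p) Cf 0 := by
    apply Finset.sum_congr rfl; intro p _
    rw [show n+1-(p+1) = n-p by omega, show t+(p+1) = t+1+p by omega]
    ring
  rw [e1, e2] at key
  rw [show n+1+1 = n+2 from rfl, e0, key]
  ring

lemma FL_n0 (n : ℕ) : FL n 0 = -(iteratedDeriv n Sf 0) := by
  simp [FL]

lemma FR_0m (m : ℕ) : FR 0 m = iteratedDeriv m Cf 0 := by
  simp [FR]

lemma FL00 : FL 0 0 = 0 := by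
  rw [FL_n0]
  simp [Sf]

lemma FR00 : FR 0 0 = 1 := by
  rw [FR_0m]
  simp [Cf]

end ArnoldBAux

open ArnoldBAux

/-- Arnold's pair of triangles `L(b), R(b)`: if the signed families
`(-1)^{i(i-1)/2} b^L_{i,j}` and `(-1)^{i(i-1)/2} b^R_{i,j}` are Seidel triangles
satisfying the stated periodic boundary conditions, then their exponential generating
functions are `-e^y sinh(x+y)/cosh 2(x+y)` and `e^{-x} cosh(x+y)/cosh 2(x+y)`. -/
theorem arnold_b_egf (bL bR : ℕ → ℕ → ℝ)
    (hrecL : ∀ i j : ℕ, 2 ≤ j → j ≤ i →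
      sgnB i * bL i j = sgnB i * bL i (j - 1) + sgnB (i - 1) * bL (i - 1) (j - 1))
    (hrecR : ∀ i j : ℕ, 2 ≤ j → j ≤ i →
      sgnB i * bR i j = sgnB i * bR i (j - 1) + sgnB (i - 1) * bR (i - 1) (j - 1))
    (hLodd : ∀ k : ℕ, bL (2 * k + 1) 1 = 0)
    (hLR : ∀ k : ℕ, 2 ≤ k → bL k k = bR k 1)
    (hR11 : bR 1 1 = 1)
    (hReven : ∀ k : ℕ, 1 ≤ k → bR (2 * k) (2 * k) = 0) :
    ∀ i j : ℕ, 1 ≤ i → 1 ≤ j → j ≤ i →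
      sgnB i * bL i j =
        iteratedDeriv (i - j)
          (fun x => iteratedDeriv (j - 1)
            (fun y => -(Real.exp y * Real.sinh (x + y)) / Real.cosh (2 * (x + y))) 0) 0 ∧
      sgnB i * bR i j =
        iteratedDeriv (i - j)
          (fun x => iteratedDeriv (j - 1)
            (fun y => Real.exp (-x) * Real.cosh (x + y) / Real.cosh (2 * (x + y))) 0) 0 := by
  have key : ∀ i : ℕ, 1 ≤ i → ∀ j : ℕ, 1 ≤ j → j ≤ i →
      sgnB i * bL i j = FL (i-j) (j-1) ∧ sgnB i * bR i j = FR (i-j) (j-1) := by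
    intro i hi
    induction i, hi using Nat.le_induction with
    | base =>
      intro j hj hji
      have hj1 : j = 1 := le_antisymm hji hj
      subst hj1
      have h0 : bL 1 1 = 0 := by
        have := hLodd 0
        norm_num at this
        exact this
      constructor
      · rw [h0, show (1:ℕ)-1 = 0 from rfl, FL00]
        ring
      · rw [hR11, show (1:ℕ)-1 = 0 from rfl, FR00, show sgnB 1 = 1 by norm_num [sgnB]]
        ring
    | succ i hi IH =>
      -- row-constancy of the signed difference with the closed form
      have hconstL : ∀ j, 1 ≤ j → j ≤ i+1 →
          sgnB (i+1) * bL (i+1) j - FL (i+1-j) (j-1)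
            = sgnB (i+1) * bL (i+1) 1 - FL i 0 := by
        intro j hj
        induction j, hj using Nat.le_induction with
        | base => intro _; norm_num
        | succ j hj ihj =>
          intro hji
          have hrec := hrecL (i+1) (j+1) (by omega) (by omega)
          simp only [Nat.add_sub_cancel] at hrec
          have hIH := (IH j hj (by omega)).1
          have hFL : FL (i-j) j = FL (i+1-j) (j-1) + FL (i-j) (j-1) := by
            have h := FL_rec (i-j) (j-1)
            rw [show (j-1)+1 = j by omega, show i-j+1 = i+1-j by omega] at h
            exact h
          simp only [Nat.add_sub_cancel]
          rw [show i+1-(j+1) = i-j by omega, hrec, hFL, hIH]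
          have h2 := ihj (by omega)
          linarith
      have hconstR : ∀ j, 1 ≤ j → j ≤ i+1 →
          sgnB (i+1) * bR (i+1) j - FR (i+1-j) (j-1)
            = sgnB (i+1) * bR (i+1) 1 - FR i 0 := by
        intro j hj
        induction j, hj using Nat.le_induction with
        | base => intro _; norm_num
        | succ j hj ihj =>
          intro hji
          have hrec := hrecR (i+1) (j+1) (by omega) (by omega)
          simp only [Nat.add_sub_cancel] at hrec
          have hIH := (IH j hj (by omega)).2
          have hFR : FR (i-j) j = FR (i+1-j) (j-1) + FR (i-j) (j-1) := by
            have h := FR_rec (i-j) (j-1)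
            rw [show (j-1)+1 = j by omega, show i-j+1 = i+1-j by omega] at h
            exact h
          simp only [Nat.add_sub_cancel]
          rw [show i+1-(j+1) = i-j by omega, hrec, hFR, hIH]
          have h2 := ihj (by omega)
          linarith
      have hbd : FL 0 i = FR i 0 := by
        have h := bdy (i-1)
        rw [show i-1+1 = i by omega] at h
        exact h
      rcases Nat.even_or_odd (i+1) with he | ho
      · -- even row : i+1 = 2k
        obtain ⟨r, hr⟩ := he
        have hk : i+1 = 2*r := by omega
        have hr1 : 1 ≤ r := by omega
        have hb : bR (i+1) (i+1) = 0 := by rw [hk]; exact hReven r hr1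
        have hFR0i : FR 0 i = 0 := by
          rw [FR_0m, show i = 2*(r-1)+1 by omega]
          exact cc_odd (r-1)
        have dR1 : sgnB (i+1) * bR (i+1) 1 - FR i 0 = 0 := by
          have h := hconstR (i+1) (by omega) le_rfl
          rw [Nat.sub_self, Nat.add_sub_cancel, hb, hFR0i] at h
          linarith
        have hRrow : ∀ j, 1 ≤ j → j ≤ i+1 →
            sgnB (i+1) * bR (i+1) j = FR (i+1-j) (j-1) := by
          intro j hj hji
          have h := hconstR j hj hji
          linarith
        have dL1 : sgnB (i+1) * bL (i+1) 1 - FL i 0 = 0 := by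
          have h := hconstL (i+1) (by omega) le_rfl
          rw [Nat.sub_self, Nat.add_sub_cancel] at h
          have hLR' : bL (i+1) (i+1) = bR (i+1) 1 := hLR (i+1) (by omega)
          have hR1 := hRrow 1 le_rfl (by omega)
          rw [Nat.add_sub_cancel, show (1:ℕ)-1 = 0 from rfl] at hR1
          rw [hLR', hR1, hbd] at h
          linarith
        have hLrow : ∀ j, 1 ≤ j → j ≤ i+1 →
            sgnB (i+1) * bL (i+1) j = FL (i+1-j) (j-1) := by
          intro j hj hji
          have h := hconstL j hj hji
          linarith
        intro j hj hji
        exact ⟨hLrow j hj hji, hRrow j hj hji⟩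
      · -- odd row : i+1 = 2k+1
        obtain ⟨k, hk⟩ := ho
        have hk1 : 1 ≤ k := by omega
        have hb1 : bL (i+1) 1 = 0 := by rw [hk]; exact hLodd k
        have hFLi0 : FL i 0 = 0 := by
          rw [FL_n0, show i = 2*k by omega, sc_even k, neg_zero]
        have dL1 : sgnB (i+1) * bL (i+1) 1 - FL i 0 = 0 := by
          rw [hb1, hFLi0]; ring
        have hLrow : ∀ j, 1 ≤ j → j ≤ i+1 →
            sgnB (i+1) * bL (i+1) j = FL (i+1-j) (j-1) := by
          intro j hj hji
          have h := hconstL j hj hji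
          linarith
        have dR1 : sgnB (i+1) * bR (i+1) 1 - FR i 0 = 0 := by
          have hLtop := hLrow (i+1) (by omega) le_rfl
          rw [Nat.sub_self, Nat.add_sub_cancel] at hLtop
          have hLR' : bL (i+1) (i+1) = bR (i+1) 1 := hLR (i+1) (by omega)
          rw [hLR'] at hLtop
          rw [hLtop, hbd]
          ring
        have hRrow : ∀ j, 1 ≤ j → j ≤ i+1 →
            sgnB (i+1) * bR (i+1) j = FR (i+1-j) (j-1) := by
          intro j hj hji
          have h := hconstR j hj hji
          linarith
        intro j hj hji
        exact ⟨hLrow j hj hji, hRrow j hj hji⟩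
  intro i j hi hj hji
  obtain ⟨h1, h2⟩ := key i hi j hj hji
  exact ⟨by rw [h1, ← formL], by rw [h2, ← formR]⟩
end

section
/- There exists a constant c>0 such that for every n≥1, every bounded measurable function f on [0,1], and i∈{0,1}: sup_{x∈[0,1]} |(S^i f)(x) − (S^i_n f)(x)| ≤ (c/n)·sup_{y∈[0,1]}|f(y)|. -/
/-! For `x ∈ [0,1]` the kernel `K^0_n(x, ·)` is the indicator of `y < b`, where
`b = (⌊(n+1)x⌋ + 1)/n` satisfies `x ≤ b ≤ x + 2/n`. Hence `S^0_n f(x) = ∫_0^{min 1 b} f` differs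
from `S^0 f(x) = ∫_0^x f` by an integral of `f` over an interval of length at most `2/n`.
Since `K^1_n = 1 - K^0_n`, the error for `i = 1` is the negative of the error for `i = 0`. -/

open MeasureTheory

/-- the operators `S^0 f (x) = ∫_0^x f` and `S^1 f (x) = ∫_x^1 f`. -/
noncomputable def Sop (i : Fin 2) (f : ℝ → ℝ) (x : ℝ) : ℝ :=
  if i = 0 then ∫ t in (0:ℝ)..x, f t else ∫ t in x..(1:ℝ), f t

/-- the kernel `K^0_n(x,y) = 1` iff `⌊(n+1)x⌋ ≥ ⌊ny⌋`. -/
noncomputable def K0n (n : ℕ) (x y : ℝ) : ℝ :=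
  if ⌊((n : ℝ) + 1) * x⌋ ≥ ⌊(n : ℝ) * y⌋ then 1 else 0

/-- the kernels `K^i_n`, `i = 0, 1`, with `K^1_n = 1 - K^0_n`. -/
noncomputable def Kn (i : Fin 2) (n : ℕ) (x y : ℝ) : ℝ :=
  if i = 0 then K0n n x y else 1 - K0n n x y

/-- the approximating integral operators `S^i_n f (x) = ∫_0^1 K^i_n(x,y) f(y) dy`. -/
noncomputable def Sopn (i : Fin 2) (n : ℕ) (f : ℝ → ℝ) (x : ℝ) : ℝ :=
  ∫ y in (0:ℝ)..1, Kn i n x y * f y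

open intervalIntegral Set
open scoped Interval

/-- The point `b` with `K^0_n(x, y) = 1 ↔ y < b`. -/
noncomputable def K0nCutoff (n : ℕ) (x : ℝ) : ℝ :=
  (⌊((n : ℝ) + 1) * x⌋ + 1) / n

section

variable {n : ℕ} {x : ℝ} {f : ℝ → ℝ}

theorem K0n_mul_eq_indicator (hn : 0 < n) (y : ℝ) :
    K0n n x y * f y = (Iio (K0nCutoff n x)).indicator f y := by
  have hcut : ⌊(n : ℝ) * y⌋ ≤ ⌊((n : ℝ) + 1) * x⌋ ↔ y < K0nCutoff n x := by
    rw [Int.floor_le_iff, K0nCutoff, lt_div_iff₀ (by exact_mod_cast hn), mul_comm]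
  by_cases hy : y < K0nCutoff n x <;> simp [K0n, hcut, hy]

theorem le_K0nCutoff (hn : 0 < n) (hx : 0 ≤ x) : x ≤ K0nCutoff n x := by
  have hn' : (0 : ℝ) < n := by exact_mod_cast hn
  rw [K0nCutoff, le_div_iff₀ hn']
  nlinarith [Int.lt_floor_add_one (((n : ℝ) + 1) * x)]

theorem K0nCutoff_le (hn : 0 < n) (hx : x ≤ 1) : K0nCutoff n x ≤ x + 2 / n := by
  have hn' : (0 : ℝ) < n := by exact_mod_cast hn
  rw [K0nCutoff, div_le_iff₀ hn', add_mul x, div_mul_cancel₀ (2 : ℝ) hn'.ne']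
  nlinarith [Int.floor_le (((n : ℝ) + 1) * x)]

end

theorem intervalIntegral_indicator_Iio {E : Type*} [NormedAddCommGroup E] [NormedSpace ℝ E]
    {f : ℝ → E} {a b c : ℝ} (hab : a ≤ b) (hac : a ≤ c) :
    ∫ y in a..b, (Iio c).indicator f y = ∫ y in a..min b c, f y := by
  rw [integral_of_le hab, integral_of_le (le_min hab hac), setIntegral_indicator measurableSet_Iio,
    ← Ioc_inter_Iic]
  exact setIntegral_congr_set ((ae_eq_refl _).inter Iio_ae_eq_Iic)

theorem intervalIntegrable_of_abs_le {f : ℝ → ℝ} {a b M : ℝ} (hab : a ≤ b) (hf : Measurable f)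
    (hM : ∀ y ∈ Icc a b, |f y| ≤ M) : IntervalIntegrable f volume a b := by
  refine (intervalIntegrable_iff_integrableOn_Icc_of_le hab).2 <|
    Measure.integrableOn_of_bounded (M := M) (by simp) hf.aestronglyMeasurable ?_
  exact (ae_restrict_iff' measurableSet_Icc).2 (ae_of_all _ hM)

section

variable {n : ℕ} {x M : ℝ} {f : ℝ → ℝ}

theorem Sopn_zero_eq (hn : 0 < n) (hx : 0 ≤ x) :
    Sopn 0 n f x = ∫ t in (0 : ℝ)..min 1 (K0nCutoff n x), f t := by
  simp only [Sopn, Kn, ↓reduceIte, K0n_mul_eq_indicator hn]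
  exact intervalIntegral_indicator_Iio zero_le_one (hx.trans (le_K0nCutoff hn hx))

theorem Sopn_one_eq (hn : 0 < n) (hf : IntervalIntegrable f volume 0 1) :
    Sopn 1 n f x = (∫ t in (0 : ℝ)..1, f t) - Sopn 0 n f x := by
  have hKf : IntervalIntegrable (fun y ↦ K0n n x y * f y) volume 0 1 := by
    simp only [K0n_mul_eq_indicator hn]
    exact ⟨hf.1.indicator measurableSet_Iio, hf.2.indicator measurableSet_Iio⟩
  simp only [Sopn, Kn, one_ne_zero, ↓reduceIte, sub_mul, one_mul]
  exact integral_sub hf hKf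

theorem Sop_one_eq (hf : IntervalIntegrable f volume 0 1) (hx : x ∈ Icc (0 : ℝ) 1) :
    Sop 1 f x = (∫ t in (0 : ℝ)..1, f t) - Sop 0 f x := by
  have hfx : IntervalIntegrable f volume 0 x :=
    hf.mono_set (uIcc_subset_uIcc_left (Icc_subset_uIcc hx))
  simp only [Sop, one_ne_zero, ↓reduceIte]
  exact (integral_interval_sub_left hf hfx).symm

theorem abs_Sop_zero_sub_Sopn_zero_le (hn : 0 < n) (hf : IntervalIntegrable f volume 0 1)
    (hM : ∀ y ∈ Icc (0 : ℝ) 1, |f y| ≤ M) (hx : x ∈ Icc (0 : ℝ) 1) :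
    |Sop 0 f x - Sopn 0 n f x| ≤ 2 / n * M := by
  have hf_on : ∀ {z}, z ∈ Icc (0 : ℝ) 1 → IntervalIntegrable f volume 0 z :=
    fun hz ↦ hf.mono_set (uIcc_subset_uIcc_left (Icc_subset_uIcc hz))
  set c := min 1 (K0nCutoff n x)
  have hxc : x ≤ c := le_min hx.2 (le_K0nCutoff hn hx.1)
  have hc : c ∈ Icc (0 : ℝ) 1 := ⟨hx.1.trans hxc, min_le_left _ _⟩
  have hcx : c - x ≤ 2 / n := by linarith [min_le_right 1 (K0nCutoff n x), K0nCutoff_le hn hx.2]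
  have hM0 : 0 ≤ M := (abs_nonneg _).trans (hM 0 (left_mem_Icc.2 zero_le_one))
  have hfM : ∀ y ∈ Ι c x, ‖f y‖ ≤ M := fun y hy ↦ by
    rw [uIoc_comm, uIoc_of_le hxc] at hy
    exact hM y ⟨hx.1.trans hy.1.le, hy.2.trans hc.2⟩
  calc |Sop 0 f x - Sopn 0 n f x|
      = ‖∫ t in c..x, f t‖ := by
        rw [Sop, if_pos rfl, Sopn_zero_eq hn hx.1,
          integral_interval_sub_left (hf_on hx) (hf_on hc), Real.norm_eq_abs]
    _ ≤ M * |x - c| := norm_integral_le_of_norm_le_const hfM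
    _ ≤ 2 / n * M := by
        rw [abs_sub_comm, abs_of_nonneg (sub_nonneg.2 hxc), mul_comm]
        exact mul_le_mul_of_nonneg_right hcx hM0

theorem abs_Sop_sub_Sopn_le (hn : 0 < n) (hf : IntervalIntegrable f volume 0 1)
    (hM : ∀ y ∈ Icc (0 : ℝ) 1, |f y| ≤ M) (hx : x ∈ Icc (0 : ℝ) 1) :
    ∀ i : Fin 2, |Sop i f x - Sopn i n f x| ≤ 2 / n * M := by
  refine Fin.forall_fin_two.2 ⟨abs_Sop_zero_sub_Sopn_zero_le hn hf hM hx, ?_⟩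
  rw [Sop_one_eq hf hx, Sopn_one_eq hn hf, sub_sub_sub_cancel_left, abs_sub_comm]
  exact abs_Sop_zero_sub_Sopn_zero_le hn hf hM hx

end

/-- The operators `S^i_n` approximate `S^i` with error `O(1/n)` in the operator norm:
`sup_{x∈[0,1]} |S^i f(x) - S^i_n f(x)| ≤ (c/n)·sup_{y∈[0,1]} |f(y)|` for every bounded
measurable `f`. -/
theorem Sop_approx :
    ∃ c : ℝ, 0 < c ∧ ∀ n : ℕ, 1 ≤ n → ∀ f : ℝ → ℝ, Measurable f →
      (∃ M : ℝ, ∀ y ∈ Set.Icc (0:ℝ) 1, |f y| ≤ M) → ∀ i : Fin 2,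
        (⨆ x : Set.Icc (0:ℝ) 1, |Sop i f x - Sopn i n f x|) ≤
          (c / n) * ⨆ y : Set.Icc (0:ℝ) 1, |f y| := by
  refine ⟨2, two_pos, fun n hn f hf ⟨M, hM⟩ i ↦ ?_⟩
  have hbdd : BddAbove (range fun y : Icc (0 : ℝ) 1 ↦ |f y|) := ⟨M, by
    rintro _ ⟨y, rfl⟩
    exact hM y y.2⟩
  have hsup : ∀ y ∈ Icc (0 : ℝ) 1, |f y| ≤ ⨆ y : Icc (0 : ℝ) 1, |f y| :=
    fun y hy ↦ le_ciSup hbdd ⟨y, hy⟩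
  have hint := intervalIntegrable_of_abs_le zero_le_one hf hM
  have : Nonempty (Icc (0 : ℝ) 1) := ⟨⟨0, left_mem_Icc.2 zero_le_one⟩⟩
  exact ciSup_le fun x ↦ abs_Sop_sub_Sopn_le hn hint hsup x.2 i
end

section
/- Let P be a periodic 0-1 sequence with period (p_1,…,p_m), m>1, p_m=0, having r zeros per period. Suppose u∈C([0,1],ℝ) and μ≠0 satisfy S^P u = μ·u. Then u is m times continuously differentiable on [0,1], μ·u^{(m)}(t) = (−1)^r·u(t) for all t∈[0,1], and for every 0≤i≤m−1: u^{(i)}(0)=0 whenever p_{m−i}=1, and u^{(i)}(1)=0 whenever p_{m−i}=0. -/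
open MeasureTheory intervalIntegral Set

notation "I01" => Set.Icc (0:ℝ) 1

/-- extend a continuous function on `[0,1]` to `ℝ` by projection. -/
noncomputable def extend01 (f : C(I01, ℝ)) : ℝ → ℝ := fun t => f (Set.projIcc 0 1 zero_le_one t)

lemma extend01_continuous (f : C(I01, ℝ)) : Continuous (extend01 f) :=
  f.continuous.comp continuous_projIcc

lemma extend01_intervalIntegrable (f : C(I01, ℝ)) (a b : ℝ) :
    IntervalIntegrable (extend01 f) volume a b :=
  (extend01_continuous f).intervalIntegrable a b

lemma extend01_add (f g : C(I01, ℝ)) : extend01 (f + g) = fun t => extend01 f t + extend01 g t := by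
  funext t; simp [extend01]

lemma extend01_smul (c : ℝ) (f : C(I01, ℝ)) : extend01 (c • f) = fun t => c * extend01 f t := by
  funext t; simp [extend01]

/-- the operator `S^0`: `(S^0 f)(x) = ∫_0^x f(t) dt` on `C([0,1],ℝ)`. -/
noncomputable def S0 : C(I01, ℝ) →L[ℝ] C(I01, ℝ) :=
  LinearMap.mkContinuous
    { toFun := fun f =>
        ⟨fun x => ∫ t in (0:ℝ)..(x:ℝ), extend01 f t,
          ((intervalIntegral.continuous_primitive (extend01_intervalIntegrable f) 0).comp
            continuous_subtype_val)⟩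
      map_add' := fun f g => by
        ext x
        simp only [ContinuousMap.coe_mk, ContinuousMap.add_apply]
        rw [extend01_add, intervalIntegral.integral_add (extend01_intervalIntegrable f 0 (x:ℝ))
          (extend01_intervalIntegrable g 0 (x:ℝ))]
      map_smul' := fun c f => by
        ext x
        simp only [ContinuousMap.coe_mk, ContinuousMap.smul_apply, RingHom.id_apply,
          smul_eq_mul]
        rw [extend01_smul, intervalIntegral.integral_const_mul] }
    1
    (fun f => by
      rw [one_mul]
      refine (ContinuousMap.norm_le _ (norm_nonneg f)).mpr fun x => ?_
      show ‖∫ t in (0:ℝ)..(x:ℝ), extend01 f t‖ ≤ ‖f‖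
      calc ‖∫ t in (0:ℝ)..(x:ℝ), extend01 f t‖
          ≤ ‖f‖ * |(x:ℝ) - 0| := by
            apply intervalIntegral.norm_integral_le_of_norm_le_const
            intro t ht
            exact f.norm_coe_le_norm _
        _ ≤ ‖f‖ := by
            have hx := x.2
            rw [sub_zero, abs_of_nonneg hx.1]
            nlinarith [norm_nonneg f, hx.2])

/-- the operator `S^1`: `(S^1 f)(x) = ∫_x^1 f(t) dt` on `C([0,1],ℝ)`. -/
noncomputable def S1 : C(I01, ℝ) →L[ℝ] C(I01, ℝ) :=
  LinearMap.mkContinuous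
    { toFun := fun f =>
        ⟨fun x => ∫ t in (x:ℝ)..(1:ℝ), extend01 f t, by
          have h : Continuous fun b : ℝ => ∫ t in (1:ℝ)..b, extend01 f t :=
            intervalIntegral.continuous_primitive (extend01_intervalIntegrable f) 1
          have heq : (fun b : ℝ => ∫ t in b..(1:ℝ), extend01 f t) =
              fun b : ℝ => -∫ t in (1:ℝ)..b, extend01 f t := by
            funext b; rw [intervalIntegral.integral_symm]
          have h' : Continuous fun b : ℝ => ∫ t in b..(1:ℝ), extend01 f t := by
            rw [heq]; exact h.neg
          exact h'.comp continuous_subtype_val⟩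
      map_add' := fun f g => by
        ext x
        simp only [ContinuousMap.coe_mk, ContinuousMap.add_apply]
        rw [extend01_add, intervalIntegral.integral_add (extend01_intervalIntegrable f (x:ℝ) 1)
          (extend01_intervalIntegrable g (x:ℝ) 1)]
      map_smul' := fun c f => by
        ext x
        simp only [ContinuousMap.coe_mk, ContinuousMap.smul_apply, RingHom.id_apply,
          smul_eq_mul]
        rw [extend01_smul, intervalIntegral.integral_const_mul] }
    1
    (fun f => by
      rw [one_mul]
      refine (ContinuousMap.norm_le _ (norm_nonneg f)).mpr fun x => ?_
      show ‖∫ t in (x:ℝ)..(1:ℝ), extend01 f t‖ ≤ ‖f‖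
      calc ‖∫ t in (x:ℝ)..(1:ℝ), extend01 f t‖
          ≤ ‖f‖ * |(1:ℝ) - (x:ℝ)| := by
            apply intervalIntegral.norm_integral_le_of_norm_le_const
            intro t ht
            exact f.norm_coe_le_norm _
        _ ≤ ‖f‖ := by
            have hx := x.2
            rw [abs_of_nonneg (by linarith [hx.2] : (0:ℝ) ≤ 1 - (x:ℝ))]
            nlinarith [norm_nonneg f, hx.1])

/-- `S^{1-p_k}`: if `p_k = 1` this is `S^0`, otherwise `S^1`. -/
noncomputable def Sstep (P : ℕ → ℕ) (k : ℕ) : C(I01, ℝ) →L[ℝ] C(I01, ℝ) :=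
  if P k = 1 then S0 else S1

/-- `SPaux P k = S^{1-p_k} ∘ ⋯ ∘ S^{1-p_1}`. -/
noncomputable def SPaux (P : ℕ → ℕ) : ℕ → (C(I01, ℝ) →L[ℝ] C(I01, ℝ))
  | 0 => ContinuousLinearMap.id ℝ _
  | k + 1 => (Sstep P (k + 1)).comp (SPaux P k)

/-- the operator `S^P = S^{1-p_m} ∘ S^{1-p_{m-1}} ∘ ⋯ ∘ S^{1-p_1}`. -/
noncomputable def SP (P : ℕ → ℕ) (m : ℕ) : C(I01, ℝ) →L[ℝ] C(I01, ℝ) := SPaux P m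

/-- An eigenfunction of `S^P` with nonzero eigenvalue `μ` is `m` times continuously
differentiable and satisfies the two-point spectral problem `μ u^{(m)} = (-1)^r u` with
the boundary conditions governed by the period (`r` is the number of zeros in the
period). -/
theorem SP_eigenfunction_ode (m r : ℕ) (P : ℕ → ℕ)
    (hm : 1 < m)
    (hP01 : ∀ k, P k = 0 ∨ P k = 1)
    (hper : ∀ k, 1 ≤ k → P (k + m) = P k)
    (hpm : P m = 0)
    (hr : r = ((Finset.Icc 1 m).filter (fun k => P k = 0)).card)
    (μ : ℝ) (hμ : μ ≠ 0) (u : C(I01, ℝ)) (hu : SP P m u = μ • u) :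
    ∃ v : ℝ → ℝ,
      (∀ x : I01, v (x : ℝ) = u x) ∧
      ContDiffOn ℝ m v (Set.Icc 0 1) ∧
      (∀ t ∈ Set.Icc (0:ℝ) 1,
        μ * iteratedDerivWithin m v (Set.Icc 0 1) t = (-1) ^ r * v t) ∧
      ∀ i : ℕ, i < m →
        (P (m - i) = 1 → iteratedDerivWithin i v (Set.Icc 0 1) 0 = 0) ∧
        (P (m - i) = 0 → iteratedDerivWithin i v (Set.Icc 0 1) 1 = 0) := by
  classical
  have hsU : UniqueDiffOn ℝ (Set.Icc (0:ℝ) 1) := uniqueDiffOn_Icc zero_lt_one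
  set w : ℕ → ℝ → ℝ := fun k => extend01 (SPaux P k u) with hw
  have hwcont : ∀ k, Continuous (w k) := fun k => extend01_continuous _
  set c : ℕ → ℝ := fun k => if P k = 1 then 1 else -1 with hc
  -- explicit formula for `w (k+1)` on `[0,1]`
  have hA : ∀ k, ∀ x ∈ Set.Icc (0:ℝ) 1,
      w (k+1) x = if P (k+1) = 1 then (∫ t in (0:ℝ)..x, w k t)
        else ∫ t in x..(1:ℝ), w k t := by
    intro k x hx
    show extend01 (((Sstep P (k+1)).comp (SPaux P k)) u) x = _
    unfold extend01
    rw [Set.projIcc_of_mem _ hx]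
    by_cases h : P (k+1) = 1 <;>
      simp only [ContinuousLinearMap.comp_apply, Sstep, h, if_true, if_false] <;>
      rfl
  -- derivative of `w (k+1)` within `[0,1]`
  have hB : ∀ k, ∀ x ∈ Set.Icc (0:ℝ) 1,
      HasDerivWithinAt (w (k+1)) (c (k+1) * w k x) (Set.Icc (0:ℝ) 1) x := by
    intro k x hx
    by_cases h : P (k+1) = 1
    · have hW : HasDerivAt (fun y : ℝ => ∫ t in (0:ℝ)..y, w k t) (w k x) x :=
        intervalIntegral.integral_hasDerivAt_right
          ((hwcont k).intervalIntegrable 0 x)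
          ((hwcont k).stronglyMeasurableAtFilter _ _)
          (hwcont k).continuousAt
      have := hW.hasDerivWithinAt (s := Set.Icc (0:ℝ) 1)
      have h' := this.congr (fun y hy => (hA k y hy).trans (if_pos h))
        ((hA k x hx).trans (if_pos h))
      simpa [hc, h] using h'
    · have hW : HasDerivAt (fun y : ℝ => ∫ t in y..(1:ℝ), w k t) (-w k x) x :=
        intervalIntegral.integral_hasDerivAt_left
          ((hwcont k).intervalIntegrable x 1)
          ((hwcont k).stronglyMeasurableAtFilter _ _)
          (hwcont k).continuousAt
      have := hW.hasDerivWithinAt (s := Set.Icc (0:ℝ) 1)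
      have h' := this.congr (fun y hy => (hA k y hy).trans (if_neg h))
        ((hA k x hx).trans (if_neg h))
      simpa [hc, h] using h'
  -- smoothness of `w k`
  have hC : ∀ k : ℕ, ContDiffOn ℝ k (w k) (Set.Icc (0:ℝ) 1) := by
    intro k
    induction k with
    | zero => simpa [contDiffOn_zero] using (hwcont 0).continuousOn
    | succ k ih =>
      have : ((k+1 : ℕ) : WithTop ℕ∞) = (k : WithTop ℕ∞) + 1 := by push_cast; ring
      rw [this, contDiffOn_succ_iff_derivWithin hsU]
      refine ⟨fun x hx => (hB k x hx).differentiableWithinAt, ?_, ?_⟩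
      · intro h; exact absurd h (by simp)
      · have hmul : ContDiffOn ℝ k (fun x => c (k+1) * w k x) (Set.Icc (0:ℝ) 1) :=
          contDiffOn_const.mul ih
        exact hmul.congr fun x hx => (hB k x hx).derivWithin (hsU x hx)
  -- the candidate function
  set v : ℝ → ℝ := extend01 u with hv
  have hwm : ∀ t, w m t = μ * v t := by
    intro t
    have : SPaux P m u = μ • u := hu
    simp [hw, this, extend01_smul, hv]
  have hvwm : ∀ t, v t = μ⁻¹ * w m t := by
    intro t; rw [hwm]; field_simp
  -- sign bookkeeping
  set σ : ℕ → ℝ := fun i => ∏ j ∈ Finset.range i, c (m - j) with hσ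
  -- iterated derivatives of v
  have hD : ∀ i : ℕ, i ≤ m → ∀ x ∈ Set.Icc (0:ℝ) 1,
      iteratedDerivWithin i v (Set.Icc (0:ℝ) 1) x = μ⁻¹ * (σ i * w (m - i) x) := by
    intro i
    induction i with
    | zero => intro _ x hx; simp [hσ, hvwm x]
    | succ i ih =>
      intro hi x hx
      have hi' : i ≤ m := le_of_lt hi
      rw [iteratedDerivWithin_succ]
      rw [derivWithin_congr (fun y hy => ih hi' y hy) (ih hi' x hx)]
      have hmi : m - i = (m - (i+1)) + 1 := by omega
      have hB' : HasDerivWithinAt (fun y => μ⁻¹ * (σ i * w (m - i) y))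
          (μ⁻¹ * σ i * (c (m - i) * w (m - (i+1)) x)) (Set.Icc (0:ℝ) 1) x := by
        have := (hB (m - (i+1)) x hx).const_mul (μ⁻¹ * σ i)
        rw [← hmi] at this
        have e : (fun y => μ⁻¹ * (σ i * w (m - i) y)) = fun y => μ⁻¹ * σ i * w (m - i) y := by
          funext y; ring
        rw [e]; exact this
      rw [hB'.derivWithin (hsU x hx)]
      have hσs : σ (i+1) = σ i * c (m - i) := by
        rw [hσ]; exact Finset.prod_range_succ _ _
      rw [hσs]; ring
  -- the sign is (-1)^r
  have hσm : σ m = (-1 : ℝ) ^ r := by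
    have h1 : σ m = ∏ j ∈ Finset.range m, c (j + 1) := by
      rw [hσ, ← Finset.prod_range_reflect]
      refine Finset.prod_congr rfl fun j hj => ?_
      congr 1
      have := Finset.mem_range.mp hj
      omega
    have h2 : ∏ j ∈ Finset.range m, c (j + 1) = ∏ k ∈ Finset.Icc 1 m, c k := by
      rw [← Finset.Ico_add_one_right_eq_Icc, Finset.prod_Ico_eq_prod_range]
      simp [add_comm]
    have h3 : ∀ k ∈ Finset.Icc 1 m, c k = if P k = 0 then (-1:ℝ) else 1 := by
      intro k _
      rcases hP01 k with h | h <;> simp [hc, h]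
    rw [h1, h2, Finset.prod_congr rfl h3, Finset.prod_ite, Finset.prod_const,
      Finset.prod_const, one_pow, mul_one, hr]
  refine ⟨v, ?_, ?_, ?_, ?_⟩
  · intro x
    simp [hv, extend01, Set.projIcc_of_mem _ x.2]
  · have hmul : ContDiffOn ℝ m (fun t => μ⁻¹ * w m t) (Set.Icc (0:ℝ) 1) :=
      contDiffOn_const.mul (hC m)
    exact hmul.congr fun x hx => hvwm x
  · intro t ht
    have := hD m le_rfl t ht
    rw [this, hσm]
    have hw0 : w 0 t = v t := rfl
    rw [Nat.sub_self, hw0]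
    field_simp
  · intro i hi
    have hi' : i ≤ m := le_of_lt hi
    have hmi : m - i = (m - i - 1) + 1 := by omega
    constructor
    · intro hP
      have h0 : (0:ℝ) ∈ Set.Icc (0:ℝ) 1 := by constructor <;> norm_num
      rw [hD i hi' 0 h0]
      have : w (m - i) 0 = 0 := by
        rw [hmi]
        rw [hA (m - i - 1) 0 h0]
        rw [← hmi, hP]
        simp
      rw [this]; ring
    · intro hP
      have h1 : (1:ℝ) ∈ Set.Icc (0:ℝ) 1 := by constructor <;> norm_num
      rw [hD i hi' 1 h1]
      have hP1 : ¬ (P (m - i) = 1) := by omega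
      have : w (m - i) 1 = 0 := by
        rw [hmi]
        rw [hA (m - i - 1) 1 h1]
        rw [← hmi, if_neg hP1]
        simp
      rw [this]; ring
end
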